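/- arXiv:2604.08753 — 4 statements merged into one kernel-verified Lean document; each statement's English description precedes it below -/
import Mathlib

section
/- For every v ∈ ℝ² and every 0 < y ≤ 1, one has ∑_{y^{-1/2}/2 ≤ d ≤ y^{-1/2}} (τ(d)/d^{3/2}) · (1 + ‖d v‖_ℤ/(d √y))^{-1} ≫ y^{1/4} log(y^{-1}+1), with an absolute implied constant. -/
open Real

/-- Distance from a point of `ℝ²` to the nearest integer point. -/
noncomputable def distZ2 (v : EuclideanSpace ℝ (Fin 2)) : ℝ :=
  ⨅ a : Fin 2 → ℤ, ‖v - (show EuclideanSpace ℝ (Fin 2) from WithLp.toLp 2 fun i => (a i : ℝ))‖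

open Finset

lemma distZ2_nonneg (v : EuclideanSpace ℝ (Fin 2)) : 0 ≤ distZ2 v :=
  Real.iInf_nonneg fun _ => norm_nonneg _

lemma distZ2_le_one (v : EuclideanSpace ℝ (Fin 2)) : distZ2 v ≤ 1 := by
  have hb : BddBelow (Set.range fun a : Fin 2 → ℤ =>
      ‖v - (show EuclideanSpace ℝ (Fin 2) from WithLp.toLp 2 fun i => (a i : ℝ))‖) := by
    refine ⟨0, fun x hx => ?_⟩
    obtain ⟨a, rfl⟩ := hx
    exact norm_nonneg _
  have h := ciInf_le hb (fun i => round (v i))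
  refine h.trans ?_
  have : ‖v - (show EuclideanSpace ℝ (Fin 2) from WithLp.toLp 2 fun i => ((round (v i) : ℤ) : ℝ))‖ ≤ 1 := by
    rw [EuclideanSpace.norm_eq]
    rw [show (1:ℝ) = Real.sqrt 1 by simp]
    apply Real.sqrt_le_sqrt
    have hbd : ∀ i : Fin 2, ‖(v - (show EuclideanSpace ℝ (Fin 2) from
        WithLp.toLp 2 fun i => ((round (v i) : ℤ) : ℝ))) i‖ ^ 2 ≤ (1:ℝ)/2 := by
      intro i
      have : (v - (show EuclideanSpace ℝ (Fin 2) from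
          WithLp.toLp 2 fun i => ((round (v i) : ℤ) : ℝ))) i = v i - round (v i) := rfl
      rw [this]
      have h1 : |v i - round (v i)| ≤ 1/2 := by
        have := abs_sub_round (v i)
        linarith
      rw [Real.norm_eq_abs]
      calc |v i - ↑(round (v i))| ^ 2 ≤ (1/2:ℝ)^2 := by
            apply pow_le_pow_left₀ (abs_nonneg _) h1
        _ ≤ 1/2 := by norm_num
    calc ∑ i, ‖(v - (show EuclideanSpace ℝ (Fin 2) from
        WithLp.toLp 2 fun i => ((round (v i) : ℤ) : ℝ))) i‖ ^ 2 ≤ ∑ _i : Fin 2, (1:ℝ)/2 :=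
          Finset.sum_le_sum fun i _ => hbd i
      _ = 1 := by simp
  exact this

-- counting multiples in Icc A N
lemma count_mult (A N k : ℕ) (hA : 1 ≤ A) :
    N / k ≤ (A - 1) / k + ((Icc A N).filter (k ∣ ·)).card := by
  rcases le_or_gt A N with h | h
  · have hsplit : Ioc 0 N = Ioc 0 (A - 1) ∪ Ioc (A - 1) N := by
      rw [Finset.Ioc_union_Ioc_eq_Ioc (Nat.zero_le _) (le_trans (Nat.sub_le _ _) h)]
    have hicc : Icc A N = Ioc (A - 1) N := by
      rw [← Nat.succ_pred_eq_of_pos hA, Nat.succ_eq_add_one, Finset.Icc_add_one_left_eq_Ioc]; rfl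
    calc N / k = ((Ioc 0 N).filter (k ∣ ·)).card := (Nat.Ioc_filter_dvd_card_eq_div N k).symm
      _ ≤ ((Ioc 0 (A-1)).filter (k ∣ ·)).card + ((Ioc (A-1) N).filter (k ∣ ·)).card := by
          rw [hsplit, filter_union]; exact card_union_le _ _
      _ = (A-1)/k + ((Icc A N).filter (k ∣ ·)).card := by
          rw [Nat.Ioc_filter_dvd_card_eq_div, hicc]
  · have : N ≤ A - 1 := by omega
    exact le_trans (Nat.div_le_div_right this) (Nat.le_add_right _ _)

-- double counting swap
lemma swap_count (A N K : ℕ) (hA : 1 ≤ A) :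
    ∑ k ∈ Icc 1 K, ((Icc A N).filter (k ∣ ·)).card ≤ ∑ d ∈ Icc A N, d.divisors.card := by
  have h1 : ∀ k, ((Icc A N).filter (k ∣ ·)).card = ∑ d ∈ Icc A N, if k ∣ d then 1 else 0 :=
    fun k => Finset.card_filter _ _
  have h2 : ∀ d ∈ Icc A N, ((Icc 1 K).filter (· ∣ d)).card ≤ d.divisors.card := by
    intro d hd
    apply Finset.card_le_card
    intro k hk
    simp only [mem_filter, mem_Icc] at hk
    rw [Nat.mem_divisors]
    exact ⟨hk.2, by rw [mem_Icc] at hd; omega⟩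
  calc ∑ k ∈ Icc 1 K, ((Icc A N).filter (k ∣ ·)).card
      = ∑ k ∈ Icc 1 K, ∑ d ∈ Icc A N, if k ∣ d then 1 else 0 := by
        exact Finset.sum_congr rfl fun k _ => h1 k
    _ = ∑ d ∈ Icc A N, ∑ k ∈ Icc 1 K, if k ∣ d then 1 else 0 := Finset.sum_comm
    _ = ∑ d ∈ Icc A N, ((Icc 1 K).filter (· ∣ d)).card := by
        exact Finset.sum_congr rfl fun d _ => (Finset.card_filter _ _).symm
    _ ≤ ∑ d ∈ Icc A N, d.divisors.card := Finset.sum_le_sum h2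

lemma harmonic_lb (K : ℕ) : Real.log (K + 1) ≤ ∑ k ∈ Icc 1 K, (k : ℝ)⁻¹ := by
  have h := log_add_one_le_harmonic K
  have h2 : ((harmonic K : ℚ) : ℝ) = ∑ k ∈ Icc 1 K, (k : ℝ)⁻¹ := by
    rw [harmonic_eq_sum_Icc]; push_cast; ring
  rw [h2] at h
  convert h using 2
  push_cast; ring

set_option maxHeartbeats 1000000 in
lemma divisor_sum_lb (X : ℝ) (hX : 1 ≤ X) :
    Real.exp (-20) * X * Real.log (X + 1) ≤
      ∑ d ∈ Icc ⌈X/2⌉₊ ⌊X⌋₊, (d.divisors.card : ℝ) := by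
  have hX0 : (0:ℝ) < X := by linarith
  set A := ⌈X/2⌉₊ with hAdef
  set N := ⌊X⌋₊ with hNdef
  have hA1 : 1 ≤ A := Nat.one_le_iff_ne_zero.mpr (by
    simp only [hAdef, ne_eq, Nat.ceil_eq_zero, not_le]; linarith)
  have hNX : (N:ℝ) ≤ X := Nat.floor_le hX0.le
  have hXN : X - 1 ≤ (N:ℝ) := by
    have := Nat.lt_floor_add_one X; linarith
  have hN1 : (1:ℝ) ≤ (N:ℝ) := by
    exact_mod_cast Nat.le_floor (α := ℝ) (by exact_mod_cast hX)
  have hAX : X/2 ≤ (A:ℝ) := Nat.le_ceil _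
  have hAX2 : (A:ℝ) ≤ X/2 + 1 := (Nat.ceil_lt_add_one (by positivity)).le
  have hAN : A ≤ N := by
    rw [hAdef, Nat.ceil_le]
    rcases le_total X 2 with h | h
    · linarith
    · linarith
  have hbase : (1:ℝ) ≤ ∑ d ∈ Icc A N, (d.divisors.card : ℝ) := by
    have hmem : A ∈ Icc A N := mem_Icc.mpr ⟨le_refl _, hAN⟩
    have hone : (1:ℝ) ≤ (A.divisors.card : ℝ) := by
      have h1 : 1 ∈ A.divisors := Nat.one_mem_divisors.mpr (by omega)
      have h2 := Finset.card_pos.mpr ⟨1, h1⟩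
      exact_mod_cast h2
    exact hone.trans (Finset.single_le_sum
      (f := fun d => (d.divisors.card : ℝ)) (fun d _ => by positivity) hmem)
  rcases le_or_gt X (Real.exp 14) with hsmall | hbig
  · -- small X
    have hlog : Real.log (X + 1) ≤ 15 := by
      rw [show (15:ℝ) = Real.log (Real.exp 15) by rw [Real.log_exp]]
      apply Real.log_le_log (by linarith)
      have h2 : Real.exp 15 = Real.exp 14 * Real.exp 1 := by
        rw [← Real.exp_add]; norm_num
      have h3 : (2:ℝ) ≤ Real.exp 1 := by
        have := Real.add_one_le_exp (1:ℝ); linarith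
      have h4 : (1:ℝ) ≤ Real.exp 14 := Real.one_le_exp (by norm_num)
      nlinarith
    have hlog0 : 0 ≤ Real.log (X + 1) := Real.log_nonneg (by linarith)
    have key : Real.exp (-20) * X * Real.log (X + 1) ≤ 1 := by
      have e0 : (0:ℝ) < Real.exp (-20) := Real.exp_pos _
      have h1 : Real.exp (-20) * X * Real.log (X + 1)
          ≤ Real.exp (-20) * Real.exp 14 * 15 :=
        mul_le_mul (mul_le_mul_of_nonneg_left hsmall e0.le) hlog hlog0 (by positivity)
      have h2 : Real.exp (-20) * Real.exp 14 = Real.exp (-6) := by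
        rw [← Real.exp_add]; norm_num
      have h3 : Real.exp (-6) * 15 ≤ 1 := by
        have h5 : (4:ℝ) ≤ Real.exp 3 := by
          have := Real.add_one_le_exp (3:ℝ); linarith
        have h6 : Real.exp 6 = Real.exp 3 * Real.exp 3 := by
          rw [← Real.exp_add]; norm_num
        have h4 : (16:ℝ) ≤ Real.exp 6 := by nlinarith
        rw [Real.exp_neg, inv_mul_le_iff₀ (by positivity)]
        linarith
      calc Real.exp (-20) * X * Real.log (X+1) ≤ Real.exp (-20) * Real.exp 14 * 15 := h1
        _ = Real.exp (-6) * 15 := by rw [h2]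
        _ ≤ 1 := h3
    linarith
  · -- large X
    set K := N / 8 with hKdef
    have hK_le : (K:ℝ) ≤ X/8 := by
      calc (K:ℝ) ≤ (N:ℝ)/8 := by exact_mod_cast Nat.cast_div_le
        _ ≤ X/8 := by linarith
    have hX15 : (15:ℝ) ≤ X := by
      have := Real.add_one_le_exp (14:ℝ); linarith
    have hK1 : X/9 ≤ (K:ℝ) + 1 := by
      have hlt : N < 8 * (K + 1) := by
        have := Nat.div_add_mod N 8; omega
      have h : (N:ℝ) < 8 * ((K:ℝ) + 1) := by exact_mod_cast hlt
      nlinarith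
    have perk : ∀ k ∈ Icc 1 K,
        (X/2)/(k:ℝ) - 1 ≤ (((Icc A N).filter (k ∣ ·)).card : ℝ) := by
      intro k hk
      rw [mem_Icc] at hk
      have hk1 : 1 ≤ k := hk.1
      have hk0 : (0:ℝ) < (k:ℝ) := by exact_mod_cast hk1
      have hcount : (↑(N/k) : ℝ)
          ≤ (↑((A-1)/k) : ℝ) + (((Icc A N).filter (k ∣ ·)).card : ℝ) := by
        exact_mod_cast count_mult A N k hA1
      have hlow : (N:ℝ) + 1 - k ≤ (k:ℝ) * (↑(N/k) : ℝ) := by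
        have hmod : N = k * (N/k) + N % k := (Nat.div_add_mod N k).symm
        have hmlt : N % k < k := Nat.mod_lt _ (by omega)
        have h1 : (N:ℝ) = (k:ℝ) * (↑(N/k):ℝ) + (↑(N % k):ℝ) := by exact_mod_cast hmod
        have h2 : (↑(N % k):ℝ) + 1 ≤ (k:ℝ) := by exact_mod_cast hmlt
        linarith
      have hup : (k:ℝ) * (↑((A-1)/k) : ℝ) ≤ (A:ℝ) - 1 := by
        have h1 : k * ((A-1)/k) ≤ A - 1 := Nat.mul_div_le _ _
        have h2 : ((k * ((A-1)/k) : ℕ) : ℝ) ≤ ((A - 1 : ℕ) : ℝ) := by exact_mod_cast h1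
        have h3 : ((A - 1 : ℕ) : ℝ) = (A:ℝ) - 1 := by
          have : (1:ℕ) ≤ A := hA1
          push_cast [this]; ring
        push_cast at h2
        linarith
      have hnum : X/2 ≤ (N:ℝ) + 2 - (A:ℝ) := by linarith
      rw [sub_le_iff_le_add, div_le_iff₀ hk0]
      have h := mul_le_mul_of_nonneg_left hcount hk0.le
      rw [mul_add] at h
      have hexpand : ((((Icc A N).filter (k ∣ ·)).card : ℝ) + 1) * k
          = (k:ℝ) * (((Icc A N).filter (k ∣ ·)).card : ℝ) + k := by ring
      rw [hexpand]
      linarith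
    have hsum1 : ∑ k ∈ Icc 1 K, ((X/2)/(k:ℝ) - 1)
        ≤ ∑ k ∈ Icc 1 K, (((Icc A N).filter (k ∣ ·)).card : ℝ) :=
      Finset.sum_le_sum perk
    have hswap : (∑ k ∈ Icc 1 K, (((Icc A N).filter (k ∣ ·)).card : ℝ))
        ≤ ∑ d ∈ Icc A N, (d.divisors.card : ℝ) := by
      exact_mod_cast swap_count A N K hA1
    have hLHS : ∑ k ∈ Icc 1 K, ((X/2)/(k:ℝ) - 1)
        = (X/2) * (∑ k ∈ Icc 1 K, ((k:ℝ))⁻¹) - K := by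
      rw [Finset.sum_sub_distrib]
      congr 1
      · rw [Finset.mul_sum]
        exact Finset.sum_congr rfl (fun k _ => div_eq_mul_inv _ _)
      · simp [Nat.card_Icc]
    have hharm := harmonic_lb K
    have hlogK : Real.log (X/9) ≤ Real.log ((K:ℝ)+1) :=
      Real.log_le_log (by positivity) hK1
    have hlog9 : Real.log (X/9) = Real.log X - Real.log 9 :=
      Real.log_div (ne_of_gt hX0) (by norm_num)
    have hlog9' : Real.log 9 ≤ 2.8 := by
      calc Real.log 9 ≤ Real.log 16 := Real.log_le_log (by norm_num) (by norm_num)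
        _ = 4 * Real.log 2 := by
            rw [show (16:ℝ) = 2^(4:ℕ) by norm_num, Real.log_pow]; push_cast; ring
        _ ≤ 2.8 := by have := Real.log_two_lt_d9; linarith
    have hlogX : (14:ℝ) ≤ Real.log X := by
      rw [show (14:ℝ) = Real.log (Real.exp 14) from (Real.log_exp _).symm]
      exact Real.log_le_log (Real.exp_pos _) hbig.le
    have hlogX1 : Real.log (X+1) ≤ Real.log X + 1 := by
      have he : (2:ℝ) ≤ Real.exp 1 := by
        have := Real.add_one_le_exp (1:ℝ); linarith
      have h1 : X + 1 ≤ Real.exp 1 * X := by nlinarith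
      calc Real.log (X+1) ≤ Real.log (Real.exp 1 * X) := Real.log_le_log (by linarith) h1
        _ = 1 + Real.log X := by
            rw [Real.log_mul (Real.exp_ne_zero 1) (ne_of_gt hX0), Real.log_exp]
      linarith
    have hexp20 : Real.exp (-20) ≤ 1/8 := by
      rw [Real.exp_neg]
      have h1 : (8:ℝ) ≤ Real.exp 20 := by
        have := Real.add_one_le_exp (20:ℝ); linarith
      rw [inv_le_comm₀ (by positivity) (by norm_num)]
      linarith
    -- combine
    have main1 : (X/2) * Real.log ((K:ℝ)+1) - X/8 ≤ ∑ d ∈ Icc A N, (d.divisors.card : ℝ) := by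
      have h1 : (X/2) * Real.log ((K:ℝ)+1) ≤ (X/2) * (∑ k ∈ Icc 1 K, ((k:ℝ))⁻¹) :=
        mul_le_mul_of_nonneg_left hharm (by linarith)
      linarith [hLHS ▸ hsum1, hswap, hK_le]
    have main2 : Real.exp (-20) * X * Real.log (X+1)
        ≤ (X/2) * Real.log ((K:ℝ)+1) - X/8 := by
      have hL : Real.log X - 2.8 ≤ Real.log ((K:ℝ)+1) := by
        rw [hlog9] at hlogK; linarith
      have hlp : 0 ≤ Real.log (X+1) := Real.log_nonneg (by linarith)
      have step : Real.exp (-20) * Real.log (X+1) ≤ (1/8) * (Real.log X + 1) :=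
        mul_le_mul hexp20 hlogX1 hlp (by norm_num)
      have cmp : (1/8) * (Real.log X + 1) ≤ (Real.log X - 2.8)/2 - 1/8 := by linarith
      have final : Real.exp (-20) * X * Real.log (X+1)
          ≤ X * ((Real.log X - 2.8)/2 - 1/8) := by
        calc Real.exp (-20) * X * Real.log (X+1)
            = X * (Real.exp (-20) * Real.log (X+1)) := by ring
          _ ≤ X * ((Real.log X - 2.8)/2 - 1/8) :=
              mul_le_mul_of_nonneg_left (step.trans cmp) hX0.le
      have expand : X * ((Real.log X - 2.8)/2 - 1/8)
          ≤ (X/2) * Real.log ((K:ℝ)+1) - X/8 := by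
        have h := mul_le_mul_of_nonneg_left hL (show (0:ℝ) ≤ X/2 by linarith)
        have e : X * ((Real.log X - 2.8)/2 - 1/8)
            = (X/2) * (Real.log X - 2.8) - X/8 := by ring
        rw [e]
        linarith
      linarith
    linarith

/-- For every `v ∈ ℝ²` and every `0 < y ≤ 1`,
`∑_{y^{-1/2}/2 ≤ d ≤ y^{-1/2}} (τ(d)/d^{3/2}) (1 + ‖dv‖_ℤ/(d√y))⁻¹ ≫ y^{1/4} log(y⁻¹+1)`,
with an absolute implied constant. -/
theorem delta_single_range_lower_bound :
    ∃ c : ℝ, 0 < c ∧ ∀ (v : EuclideanSpace ℝ (Fin 2)) (y : ℝ), 0 < y → y ≤ 1 →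
      c * y ^ (1/4 : ℝ) * Real.log (y⁻¹ + 1)
        ≤ ∑ d ∈ Finset.Icc ⌈y ^ (-(1/2) : ℝ) / 2⌉₊ ⌊y ^ (-(1/2) : ℝ)⌋₊,
            (d.divisors.card : ℝ) / (d : ℝ) ^ (3/2 : ℝ) *
              (1 + distZ2 ((d : ℝ) • v) / ((d : ℝ) * Real.sqrt y))⁻¹ := by
  refine ⟨Real.exp (-20) / 6, by positivity, fun v y hy hy1 => ?_⟩
  set X := y ^ (-(1/2) : ℝ) with hXdef
  have hX1 : 1 ≤ X :=
    Real.one_le_rpow_of_pos_of_le_one_of_nonpos hy hy1 (by norm_num)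
  have hX0 : (0:ℝ) < X := lt_of_lt_of_le one_pos hX1
  have hsq : Real.sqrt y = y ^ ((1:ℝ)/2) := Real.sqrt_eq_rpow y
  have hsq0 : 0 < Real.sqrt y := Real.sqrt_pos.mpr hy
  have hXs : X * Real.sqrt y = 1 := by
    rw [hsq, hXdef, ← Real.rpow_add hy]; norm_num
  -- per-term lower bound
  have hterm : ∀ d ∈ Icc ⌈X/2⌉₊ ⌊X⌋₊,
      (d.divisors.card : ℝ) * (y ^ ((3:ℝ)/4) / 3)
        ≤ (d.divisors.card : ℝ) / (d : ℝ) ^ (3/2 : ℝ) *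
            (1 + distZ2 ((d : ℝ) • v) / ((d : ℝ) * Real.sqrt y))⁻¹ := by
    intro d hd
    rw [mem_Icc] at hd
    have hd1 : 1 ≤ d := le_trans (Nat.one_le_iff_ne_zero.mpr (by
      simp only [ne_eq, Nat.ceil_eq_zero, not_le]; positivity)) hd.1
    have hd0 : (0:ℝ) < (d:ℝ) := by exact_mod_cast hd1
    have hdX : (d:ℝ) ≤ X :=
      le_trans (by exact_mod_cast hd.2) (Nat.floor_le hX0.le)
    have hdA : X/2 ≤ (d:ℝ) :=
      le_trans (Nat.le_ceil _) (by exact_mod_cast hd.1)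
    -- bound on the power factor
    have h32 : (d:ℝ) ^ (3/2 : ℝ) ≤ X ^ (3/2 : ℝ) :=
      Real.rpow_le_rpow hd0.le hdX (by norm_num)
    have hX32 : X ^ (3/2 : ℝ) = y ^ (-(3/4) : ℝ) := by
      rw [hXdef, ← Real.rpow_mul hy.le]
      norm_num
    have hpow : y ^ ((3:ℝ)/4) ≤ ((d:ℝ) ^ (3/2 : ℝ))⁻¹ := by
      have hXinv : (X ^ (3/2 : ℝ))⁻¹ = y ^ ((3:ℝ)/4) := by
        rw [hX32, ← Real.rpow_neg hy.le]; norm_num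
      rw [← hXinv]
      exact inv_anti₀ (Real.rpow_pos_of_pos hd0 _) h32
    -- bound on the distance factor
    have hds : (1:ℝ)/2 ≤ (d:ℝ) * Real.sqrt y := by
      have := mul_le_mul_of_nonneg_right hdA hsq0.le
      rw [div_mul_eq_mul_div, hXs] at this
      linarith
    have hdspos : (0:ℝ) < (d:ℝ) * Real.sqrt y := by positivity
    have hq0 : 0 ≤ distZ2 ((d:ℝ) • v) / ((d:ℝ) * Real.sqrt y) :=
      div_nonneg (distZ2_nonneg _) hdspos.le
    have hq2 : distZ2 ((d:ℝ) • v) / ((d:ℝ) * Real.sqrt y) ≤ 2 := by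
      rw [div_le_iff₀ hdspos]
      calc distZ2 ((d:ℝ) • v) ≤ 1 := distZ2_le_one _
        _ ≤ 2 * ((d:ℝ) * Real.sqrt y) := by linarith
    have hfac : (1:ℝ)/3 ≤ (1 + distZ2 ((d:ℝ) • v) / ((d:ℝ) * Real.sqrt y))⁻¹ := by
      rw [show (1:ℝ)/3 = (3:ℝ)⁻¹ by norm_num]
      exact inv_anti₀ (by linarith) (by linarith)
    -- combine
    have hτ0 : (0:ℝ) ≤ (d.divisors.card : ℝ) := Nat.cast_nonneg _
    calc (d.divisors.card : ℝ) * (y ^ ((3:ℝ)/4) / 3)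
        = (d.divisors.card : ℝ) * (y ^ ((3:ℝ)/4) * (1/3)) := by ring
      _ ≤ (d.divisors.card : ℝ) * (((d:ℝ) ^ (3/2 : ℝ))⁻¹ *
            (1 + distZ2 ((d:ℝ) • v) / ((d:ℝ) * Real.sqrt y))⁻¹) := by
          apply mul_le_mul_of_nonneg_left _ hτ0
          apply mul_le_mul hpow hfac (by norm_num) (by positivity)
      _ = (d.divisors.card : ℝ) / (d : ℝ) ^ (3/2 : ℝ) *
            (1 + distZ2 ((d:ℝ) • v) / ((d:ℝ) * Real.sqrt y))⁻¹ := by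
          rw [div_eq_mul_inv]; ring
  have hsum : ∑ d ∈ Icc ⌈X/2⌉₊ ⌊X⌋₊, (d.divisors.card : ℝ) * (y ^ ((3:ℝ)/4) / 3)
      ≤ ∑ d ∈ Icc ⌈X/2⌉₊ ⌊X⌋₊,
          (d.divisors.card : ℝ) / (d : ℝ) ^ (3/2 : ℝ) *
            (1 + distZ2 ((d : ℝ) • v) / ((d : ℝ) * Real.sqrt y))⁻¹ :=
    Finset.sum_le_sum hterm
  have hfactor : ∑ d ∈ Icc ⌈X/2⌉₊ ⌊X⌋₊, (d.divisors.card : ℝ) * (y ^ ((3:ℝ)/4) / 3)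
      = (y ^ ((3:ℝ)/4) / 3) * ∑ d ∈ Icc ⌈X/2⌉₊ ⌊X⌋₊, (d.divisors.card : ℝ) := by
    rw [Finset.mul_sum]
    exact Finset.sum_congr rfl fun d _ => mul_comm _ _
  have hdiv := divisor_sum_lb X hX1
  have hy34 : (0:ℝ) ≤ y ^ ((3:ℝ)/4) / 3 := by positivity
  have hchain : (y ^ ((3:ℝ)/4) / 3) * (Real.exp (-20) * X * Real.log (X + 1))
      ≤ ∑ d ∈ Icc ⌈X/2⌉₊ ⌊X⌋₊,
          (d.divisors.card : ℝ) / (d : ℝ) ^ (3/2 : ℝ) *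
            (1 + distZ2 ((d : ℝ) • v) / ((d : ℝ) * Real.sqrt y))⁻¹ := by
    calc (y ^ ((3:ℝ)/4) / 3) * (Real.exp (-20) * X * Real.log (X + 1))
        ≤ (y ^ ((3:ℝ)/4) / 3) * ∑ d ∈ Icc ⌈X/2⌉₊ ⌊X⌋₊, (d.divisors.card : ℝ) :=
          mul_le_mul_of_nonneg_left hdiv hy34
      _ = ∑ d ∈ Icc ⌈X/2⌉₊ ⌊X⌋₊, (d.divisors.card : ℝ) * (y ^ ((3:ℝ)/4) / 3) :=
          hfactor.symm
      _ ≤ _ := hsum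
  -- identities relating y and X
  have hyX : y ^ ((3:ℝ)/4) * X = y ^ ((1:ℝ)/4) := by
    rw [hXdef, ← Real.rpow_add hy]; norm_num
  have hXsq : X ^ (2:ℕ) = y⁻¹ := by
    rw [hXdef, ← Real.rpow_natCast (y ^ (-(1/2) : ℝ)) 2, ← Real.rpow_mul hy.le]
    norm_num [Real.rpow_neg_one]
  have hlog2 : Real.log (y⁻¹ + 1) ≤ 2 * Real.log (X + 1) := by
    have h1 : y⁻¹ + 1 ≤ (X + 1) ^ (2:ℕ) := by
      rw [← hXsq]; ring_nf; nlinarith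
    calc Real.log (y⁻¹ + 1) ≤ Real.log ((X + 1) ^ (2:ℕ)) :=
          Real.log_le_log (by positivity) h1
      _ = 2 * Real.log (X + 1) := by rw [Real.log_pow]; push_cast; ring
  have hlogpos : 0 ≤ Real.log (X + 1) := Real.log_nonneg (by linarith)
  have hfin : Real.exp (-20) / 6 * y ^ (1/4 : ℝ) * Real.log (y⁻¹ + 1)
      ≤ (y ^ ((3:ℝ)/4) / 3) * (Real.exp (-20) * X * Real.log (X + 1)) := by
    have hc0 : (0:ℝ) ≤ Real.exp (-20) / 6 * y ^ (1/4 : ℝ) := by positivity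
    calc Real.exp (-20) / 6 * y ^ (1/4 : ℝ) * Real.log (y⁻¹ + 1)
        ≤ Real.exp (-20) / 6 * y ^ (1/4 : ℝ) * (2 * Real.log (X + 1)) :=
          mul_le_mul_of_nonneg_left hlog2 hc0
      _ = (y ^ ((3:ℝ)/4) * X / 3) * (Real.exp (-20) * Real.log (X + 1)) := by
          rw [hyX]; ring
      _ = (y ^ ((3:ℝ)/4) / 3) * (Real.exp (-20) * X * Real.log (X + 1)) := by ring
  exact hfin.trans hchain
end

section
/- For every M ∈ SL(2,ℝ), the cuspidal height satisfies 𝒴(M) ≤ ‖M‖², where 𝒴(M) = sup{Im(γM(i)) : γ ∈ SL(2,ℤ)} and ‖M‖ is the Frobenius norm. -/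
open Real MatrixGroups

/-- The Frobenius norm of a `2 × 2` real matrix. -/
noncomputable def frobNorm (M : Matrix (Fin 2) (Fin 2) ℝ) : ℝ :=
  Real.sqrt (∑ i, ∑ j, (M i j) ^ 2)

/-- The cuspidal height `𝒴(M) = sup{Im(γ M (i)) : γ ∈ SL(2,ℤ)}`. -/
noncomputable def cuspHeight (M : Matrix.SpecialLinearGroup (Fin 2) ℝ) : ℝ :=
  ⨆ γ : Matrix.SpecialLinearGroup (Fin 2) ℤ,
    ((Matrix.SpecialLinearGroup.map (Int.castRingHom ℝ) γ * M) • UpperHalfPlane.I).im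

/-! Let `(r, s) ∈ ℤ² ∖ {0}` be the bottom row of `γ ∈ SL(2,ℤ)`; the bottom row of `γM` is
`(x, y) = (r, s) M`, and `Im(γM(i)) = 1 / (x² + y²)`. Since `det M = 1`,
`(r, s) = (x, y) adj M`, so by Cauchy–Schwarz
`1 ≤ r² + s² ≤ (x² + y²) ‖adj M‖² = (x² + y²) ‖M‖²`. -/

lemma frobNorm_sq (A : Matrix (Fin 2) (Fin 2) ℝ) :
    frobNorm A ^ 2 = A 0 0 ^ 2 + A 0 1 ^ 2 + A 1 0 ^ 2 + A 1 1 ^ 2 := by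
  rw [frobNorm, sq_sqrt (by positivity)]
  simp only [Fin.sum_univ_two]
  ring

lemma sq_det_mul_le_mul_frobNorm_sq (A : Matrix (Fin 2) (Fin 2) ℝ) (r s : ℝ) :
    A.det ^ 2 * (r ^ 2 + s ^ 2) ≤
      frobNorm A ^ 2 * ((r * A 0 0 + s * A 1 0) ^ 2 + (r * A 0 1 + s * A 1 1) ^ 2) := by
  set x := r * A 0 0 + s * A 1 0
  set y := r * A 0 1 + s * A 1 1
  have lagrange : A.det ^ 2 * (r ^ 2 + s ^ 2) + (x * A 1 0 + y * A 1 1) ^ 2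
      + (x * A 0 0 + y * A 0 1) ^ 2 = frobNorm A ^ 2 * (x ^ 2 + y ^ 2) := by
    rw [frobNorm_sq, Matrix.det_fin_two]
    ring
  linarith [sq_nonneg (x * A 1 0 + y * A 1 1), sq_nonneg (x * A 0 0 + y * A 0 1)]

lemma Matrix.SpecialLinearGroup.sq_add_sq_pos {R : Type*} [CommRing R] [LinearOrder R]
    [IsStrictOrderedRing R] (g : SL(2, R)) (i : Fin 2) : 0 < g i 0 ^ 2 + g i 1 ^ 2 := by
  obtain ⟨j, hj⟩ := Function.ne_iff.mp (row_ne_zero g i)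
  fin_cases j
  · exact lt_add_of_pos_of_le (sq_pos_of_ne_zero hj) (sq_nonneg _)
  · exact lt_add_of_le_of_pos (sq_nonneg _) (sq_pos_of_ne_zero hj)

lemma UpperHalfPlane.im_smul_I (g : SL(2, ℝ)) :
    (g • I).im = 1 / (g 1 0 ^ 2 + g 1 1 ^ 2) := by
  rw [MulAction.compHom_smul_def, im_smul_eq_div_normSq]
  simp [Complex.normSq, denom, sq, add_comm]

/-- For every `M ∈ SL(2,ℝ)`, the cuspidal height satisfies `𝒴(M) ≤ ‖M‖²`, where `‖M‖`
is the Frobenius norm. -/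
theorem cuspHeight_le_frobNorm_sq (M : Matrix.SpecialLinearGroup (Fin 2) ℝ) :
    cuspHeight M ≤ frobNorm (M : Matrix (Fin 2) (Fin 2) ℝ) ^ 2 := by
  refine ciSup_le fun γ => ?_
  set N := Matrix.SpecialLinearGroup.map (Int.castRingHom ℝ) γ * M
  have bottom_row : N 1 0 = γ 1 0 * M 0 0 + γ 1 1 * M 1 0 ∧
      N 1 1 = γ 1 0 * M 0 1 + γ 1 1 * M 1 1 := by
    simp [N, Matrix.SpecialLinearGroup.coe_mul, Matrix.mul_apply, Fin.sum_univ_two]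
  rw [UpperHalfPlane.im_smul_I, div_le_iff₀ (N.sq_add_sq_pos 1), bottom_row.1, bottom_row.2]
  calc (1 : ℝ)
      ≤ (M : Matrix (Fin 2) (Fin 2) ℝ).det ^ 2 * ((γ 1 0 : ℝ) ^ 2 + (γ 1 1 : ℝ) ^ 2) := by
        rw [M.det_coe, one_pow, one_mul]
        exact_mod_cast Int.add_one_le_iff.mpr (γ.sq_add_sq_pos 1)
    _ ≤ _ := sq_det_mul_le_mul_frobNorm_sq _ _ _
end

section
/- Let k₁,k₂,k₃ ≥ 0 be reals and set r = 5k₁+2k₂+2k₃ and r' = k₁. Then for every 0 < y ≤ 1, every s ∈ ℝ, and every x = (x₁,x₂,x₃,x₄) ∈ ℝ⁴ with |x₁x₄ − x₂x₃| ≤ 2 and (x₁,x₃) ≠ (0,0), one has ((x₁²+x₃²)(1+s²) + 1/(x₁²+x₃²))^{-r/2} · (1 + |ys − (x₁x₂+x₃x₄)/(x₁²+x₃²)|)^{-r'} ≪_{k₁,k₂,k₃} (1+‖x‖)^{-k₁} (1 + 1/(x₁²+x₃²))^{-k₂} (1+|s|)^{-k₃}, where ‖x‖ is the Euclidean norm on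 ℝ⁴. -/
set_option maxHeartbeats 4000000

open Real

/-- If `a² ≤ b` then `a^k ≤ b^(k/2)` for `0 ≤ a, k`. -/
lemma pow_half_bound {a b k : ℝ} (ha : 0 ≤ a) (hk : 0 ≤ k) (h : a^2 ≤ b) :
    a ^ k ≤ b ^ (k/2) := by
  have hb : 0 ≤ b := le_trans (sq_nonneg a) h
  have h1 : a ≤ b ^ ((1:ℝ)/2) := by
    rw [← Real.sqrt_eq_rpow]
    exact (Real.le_sqrt ha hb).mpr h
  calc a ^ k ≤ (b ^ ((1:ℝ)/2)) ^ k := Real.rpow_le_rpow ha h1 hk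
    _ = b ^ (k/2) := by rw [← Real.rpow_mul hb]; ring_nf

/-- Abstract form of the geometric bound. -/
lemma aux_geom {a u c d : ℝ} (ha : 0 < a) (hid : a*u = c^2+d^2) (hd : d^2 ≤ 4) :
    a*(1+(a+u)) ≤ 5*(a^2+1)*(1+c^2) := by
  nlinarith [hd, sq_nonneg (a-1), mul_nonneg (sq_nonneg a) (sq_nonneg c), ha.le, sq_nonneg c]

/-- The key majorant inequality: for `k₁,k₂,k₃ ≥ 0`, `r = 5k₁+2k₂+2k₃`, `r' = k₁`,
`0 < y ≤ 1`, `s ∈ ℝ`, and `x ∈ ℝ⁴` with `|x₁x₄ − x₂x₃| ≤ 2` and `(x₁,x₃) ≠ (0,0)`: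
`((x₁²+x₃²)(1+s²) + (x₁²+x₃²)⁻¹)^{-r/2} (1+|ys − (x₁x₂+x₃x₄)/(x₁²+x₃²)|)^{-r'}`
`≪_{k₁,k₂,k₃} (1+‖x‖)^{-k₁} (1+(x₁²+x₃²)⁻¹)^{-k₂} (1+|s|)^{-k₃}`. -/
theorem majorant_inequality (k₁ k₂ k₃ : ℝ) (hk₁ : 0 ≤ k₁) (hk₂ : 0 ≤ k₂) (hk₃ : 0 ≤ k₃) :
    ∃ C : ℝ, 0 < C ∧ ∀ (y s x₁ x₂ x₃ x₄ : ℝ), 0 < y → y ≤ 1 →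
      |x₁ * x₄ - x₂ * x₃| ≤ 2 → (x₁, x₃) ≠ (0, 0) →
      ((x₁^2 + x₃^2) * (1 + s^2) + (x₁^2 + x₃^2)⁻¹) ^ (-((5*k₁+2*k₂+2*k₃) / 2)) *
          (1 + |y * s - (x₁*x₂ + x₃*x₄) / (x₁^2 + x₃^2)|) ^ (-k₁)
        ≤ C * (1 + Real.sqrt (x₁^2 + x₂^2 + x₃^2 + x₄^2)) ^ (-k₁) *
            (1 + (x₁^2 + x₃^2)⁻¹) ^ (-k₂) * (1 + |s|) ^ (-k₃) := by
  refine ⟨(40:ℝ)^(k₁/2) * 2^k₂, by positivity, ?_⟩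
  intro y s x₁ x₂ x₃ x₄ hy hy1 hdet hne
  have hA : 0 < x₁^2 + x₃^2 := by
    rcases (show x₁ ≠ 0 ∨ x₃ ≠ 0 by
      by_contra h; push_neg at h; exact hne (by simp [h.1, h.2])) with h | h <;> positivity
  have hd2 : (x₁*x₄ - x₂*x₃)^2 ≤ 4 := by
    have h := abs_le.mp hdet; nlinarith [h.1, h.2]
  have h5' : (x₁^2+x₃^2) * (1 + (x₁^2 + x₂^2 + x₃^2 + x₄^2))
      ≤ 5*((x₁^2+x₃^2)^2+1)*(1+(x₁*x₂+x₃*x₄)^2) := by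
    have h := aux_geom hA (u := x₂^2+x₄^2) (c := x₁*x₂+x₃*x₄) (d := x₁*x₄-x₂*x₃)
      (by ring) hd2
    nlinarith [h]
  set A : ℝ := x₁^2 + x₃^2 with hAdef
  set b : ℝ := x₁*x₂ + x₃*x₄ with hbdef
  set D : ℝ := A * (1 + s^2) + A⁻¹ with hDdef
  set E : ℝ := 1 + |y * s - b / A| with hEdef
  set N : ℝ := Real.sqrt (x₁^2 + x₂^2 + x₃^2 + x₄^2) with hNdef
  have hN2 : N^2 = x₁^2 + x₂^2 + x₃^2 + x₄^2 := Real.sq_sqrt (by positivity)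
  have hEeq : |y * s - b / A| = E - 1 := by rw [hEdef]; ring
  clear_value A b D E N
  have hA' : A * A⁻¹ = 1 := mul_inv_cancel₀ hA.ne'
  have hE1 : (1:ℝ) ≤ E := by nlinarith [abs_nonneg (y * s - b / A), hEeq]
  have hAi : 0 < A⁻¹ := inv_pos.mpr hA
  have hD : 0 < D := by rw [hDdef]; positivity
  have hE0 : 0 < E := lt_of_lt_of_le one_pos hE1
  have hN0 : 0 ≤ N := by rw [hNdef]; exact Real.sqrt_nonneg _
  -- basic bounds
  have hAAinv : A + A⁻¹ ≤ D := by nlinarith [sq_nonneg s, hA.le]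
  have hsD : 1 + |s| ≤ D := by
    have h2 : 1 + |s| ≤ A * (1 + s^2) + A⁻¹ := by
      nlinarith [sq_nonneg (2*(1+s^2)*A - (1+|s|)), sq_nonneg (|s|-1), sq_abs s,
        abs_nonneg s, hA, hA', hAi.le]
    linarith [h2]
  have hQD : 1 + A⁻¹ ≤ 2*D := by nlinarith [hAAinv, hA, hA', sq_nonneg (A-1), hAi.le]
  have h1A : 1 + A ≤ 2*D := by nlinarith [hAAinv, hA, hA', sq_nonneg (A-1), hAi.le]
  -- key geometric bound
  have h5 : 1 + (x₁^2 + x₂^2 + x₃^2 + x₄^2) ≤ 5*(A+A⁻¹)*(1+b^2) := by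
    rw [← mul_le_mul_iff_right₀ hA]
    have hAA : A*(5*(A+A⁻¹)*(1+b^2)) = 5*(A^2+1)*(1+b^2) := by
      linear_combination 5*(1+b^2)*hA'
    rw [hAA]
    exact h5'
  have hbb : 1 + b^2 ≤ (1+|b|)^2 := by nlinarith [abs_nonneg b, sq_abs b]
  have hb0 : (0:ℝ) ≤ 1 + |b| := by positivity
  -- bound 1+|b| by D and E
  have hys : |y*s| ≤ |s| := by
    rw [abs_mul, abs_of_pos hy]; nlinarith [abs_nonneg s]
  have hv : 1 + |b/A| ≤ (1+|s|)*E := by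
    have h1 : |b/A| ≤ |y*s| + |y*s - b/A| := by
      calc |b/A| = |y*s - (y*s - b/A)| := by ring_nf
        _ ≤ |y*s| + |y*s - b/A| := abs_sub _ _
    have h2 : |y*s - b/A| = E - 1 := hEeq
    nlinarith [abs_nonneg s, hE1, h1, hys, abs_nonneg (y*s - b/A)]
  have hbE : 1 + |b| ≤ 2*D^2*E := by
    have hbA : |b| = A * |b/A| := by
      rw [abs_div, abs_of_pos hA]; field_simp
    calc 1 + |b| = 1 + A*|b/A| := by rw [hbA]
      _ ≤ (1+A)*(1+|b/A|) := by nlinarith [hA.le, abs_nonneg (b/A)]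
      _ ≤ (1+A)*((1+|s|)*E) := by
          apply mul_le_mul_of_nonneg_left hv (by positivity)
      _ ≤ (2*D)*(D*E) := by
          apply mul_le_mul h1A (mul_le_mul_of_nonneg_right hsD hE0.le)
            (by positivity) (by positivity)
      _ = 2*D^2*E := by ring
  -- B1: (1+N)² ≤ 40 D⁵ E²
  have hB1 : (1+N)^2 ≤ 40*D^5*E^2 := by
    have step1 : (1+N)^2 ≤ 2*(1 + (x₁^2 + x₂^2 + x₃^2 + x₄^2)) := by
      nlinarith [sq_nonneg (1-N), hN2]
    have step2 : (1+N)^2 ≤ 10*(A+A⁻¹)*(1+|b|)^2 := by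
      have := mul_le_mul_of_nonneg_left hbb (by positivity : (0:ℝ) ≤ 5*(A+A⁻¹))
      linarith [h5, step1, this]
    have step3 : (1+|b|)^2 ≤ (2*D^2*E)^2 := by
      exact pow_le_pow_left₀ hb0 hbE 2
    have hAD : 10*(A+A⁻¹)*(1+|b|)^2 ≤ 10*D*(2*D^2*E)^2 := by
      apply mul_le_mul (by linarith [hAAinv]) step3 (by positivity) (by positivity)
    calc (1+N)^2 ≤ 10*D*(2*D^2*E)^2 := le_trans step2 hAD
      _ = 40*D^5*E^2 := by ring
  -- rpow bounds
  have hP : (1+N)^k₁ ≤ (40*D^5*E^2)^(k₁/2) := pow_half_bound (by positivity) hk₁ hB1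
  have hQ : (1+A⁻¹)^k₂ ≤ (2*D)^k₂ :=
    Real.rpow_le_rpow (by positivity) hQD hk₂
  have hS : (1+|s|)^k₃ ≤ D^k₃ :=
    Real.rpow_le_rpow (by positivity) hsD hk₃
  -- main product inequality
  have hmain : (1+N)^k₁ * (1+A⁻¹)^k₂ * (1+|s|)^k₃
      ≤ ((40:ℝ)^(k₁/2) * 2^k₂) * (D^((5*k₁+2*k₂+2*k₃)/2) * E^k₁) := by
    have hstep : (1+N)^k₁ * (1+A⁻¹)^k₂ * (1+|s|)^k₃
        ≤ (40*D^5*E^2)^(k₁/2) * (2*D)^k₂ * D^k₃ := by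
      apply mul_le_mul (mul_le_mul hP hQ (by positivity) (by positivity)) hS
        (by positivity) (by positivity)
    refine le_trans hstep (le_of_eq ?_)
    rw [Real.mul_rpow (by positivity) (by positivity),
        Real.mul_rpow (by positivity) (by positivity),
        Real.mul_rpow (by positivity) (by positivity),
        ← Real.rpow_natCast D 5, ← Real.rpow_natCast E 2,
        ← Real.rpow_mul hD.le, ← Real.rpow_mul hE0.le,
        show ((5:ℕ):ℝ)*(k₁/2) = 5*k₁/2 by push_cast; ring,
        show ((2:ℕ):ℝ)*(k₁/2) = k₁ by push_cast; ring,
        show (5*k₁+2*k₂+2*k₃)/2 = 5*k₁/2+k₂+k₃ by ring,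
        Real.rpow_add hD, Real.rpow_add hD]
    ring
  -- convert goal
  have hu : 0 < D^((5*k₁+2*k₂+2*k₃)/2) * E^k₁ := by positivity
  have hvpos : 0 < (1+N)^k₁ * (1+A⁻¹)^k₂ * (1+|s|)^k₃ := by positivity
  have hgoal : (D^((5*k₁+2*k₂+2*k₃)/2) * E^k₁)⁻¹
      ≤ ((40:ℝ)^(k₁/2) * 2^k₂) * ((1+N)^k₁ * (1+A⁻¹)^k₂ * (1+|s|)^k₃)⁻¹ := by
    rw [show (D^((5*k₁+2*k₂+2*k₃)/2) * E^k₁)⁻¹ = 1 / (D^((5*k₁+2*k₂+2*k₃)/2) * E^k₁) by ring,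
        show ((40:ℝ)^(k₁/2) * 2^k₂) * ((1+N)^k₁ * (1+A⁻¹)^k₂ * (1+|s|)^k₃)⁻¹
          = ((40:ℝ)^(k₁/2) * 2^k₂) / ((1+N)^k₁ * (1+A⁻¹)^k₂ * (1+|s|)^k₃) by ring,
        div_le_div_iff₀ hu hvpos]
    linarith [hmain]
  calc D ^ (-((5*k₁+2*k₂+2*k₃) / 2)) * E ^ (-k₁)
      = (D^((5*k₁+2*k₂+2*k₃)/2) * E^k₁)⁻¹ := by
        rw [Real.rpow_neg hD.le, Real.rpow_neg hE0.le, mul_inv]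
    _ ≤ ((40:ℝ)^(k₁/2) * 2^k₂) * ((1+N)^k₁ * (1+A⁻¹)^k₂ * (1+|s|)^k₃)⁻¹ := hgoal
    _ = ((40:ℝ)^(k₁/2) * 2^k₂) * (1+N)^(-k₁) * (1+A⁻¹)^(-k₂) * (1+|s|)^(-k₃) := by
        rw [Real.rpow_neg (by positivity), Real.rpow_neg (by positivity),
          Real.rpow_neg (by positivity), mul_inv, mul_inv]
        ring
end

section
/- Let z = (x₁,x₃), w = (x₂,x₄) ∈ ℝ² with z ≠ 0 and |x₁x₄ − x₂x₃| ≤ 2. Then 1 + ‖(x₁,x₂,x₃,x₄)‖² ≪ (‖z‖² + ‖z‖^{-2})(1 + |z·w|)², with an absolute implied constant. -/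
/-!
Write `s = ‖z‖²`, `p = z·w` and `d = x₁x₄ − x₂x₃`. Lagrange's identity `‖z‖²‖w‖² = p² + d²`
gives `‖x‖² = s + (p² + d²)/s ≤ s + (p² + 4)/s`, and each of `1`, `s`, `4/s` and `p²/s` is
at most a constant times `(s + s⁻¹)(1 + p²)`; for `1` this is `s + s⁻¹ ≥ 2`.
-/

open Real

section OrderedRing

variable {R : Type*} [CommRing R] [LinearOrder R] [IsStrictOrderedRing R]

theorem sq_add_sq_pos_of_ne_zero {a b : R} (h : (a, b) ≠ (0, 0)) : 0 < a ^ 2 + b ^ 2 := by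
  obtain ha | hb : a ≠ 0 ∨ b ≠ 0 := by simpa only [Ne, Prod.mk.injEq, not_and_or] using h
  · positivity
  · positivity

theorem one_add_sq_le_one_add_abs_sq (p : R) : 1 + p ^ 2 ≤ (1 + |p|) ^ 2 := by
  nlinarith [abs_nonneg p, sq_abs p]

end OrderedRing

theorem sq_add_sq_mul_sq_add_sq_eq_inner_sq_add_det_sq {R : Type*} [CommRing R]
    (x₁ x₂ x₃ x₄ : R) :
    (x₁ ^ 2 + x₃ ^ 2) * (x₂ ^ 2 + x₄ ^ 2) = (x₁ * x₂ + x₃ * x₄) ^ 2 + (x₁ * x₄ - x₂ * x₃) ^ 2 := by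
  ring

section OrderedField

variable {K : Type*} [Field K] [LinearOrder K] [IsStrictOrderedRing K]

theorem two_le_add_inv_self {s : K} (hs : 0 < s) : 2 ≤ s + s⁻¹ := by
  have hinv : s * s⁻¹ = 1 := mul_inv_cancel₀ hs.ne'
  nlinarith [mul_nonneg (sq_nonneg (s - 1)) (inv_pos.mpr hs).le]

theorem one_add_add_sq_add_sq_div_le {s p d : K} (hs : 0 < s) (hd : |d| ≤ 2) :
    1 + s + (p ^ 2 + d ^ 2) / s ≤ 5 * (s + s⁻¹) * (1 + p ^ 2) := by
  have hs' : 0 < s⁻¹ := inv_pos.mpr hs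
  have hd2 : d ^ 2 ≤ 4 := by nlinarith [abs_nonneg d, sq_abs d]
  have hamgm := two_le_add_inv_self hs
  calc 1 + s + (p ^ 2 + d ^ 2) / s = 1 + s + d ^ 2 * s⁻¹ + p ^ 2 * s⁻¹ := by ring
    _ ≤ (s + s⁻¹) / 2 + s + 4 * s⁻¹ + p ^ 2 * s⁻¹ := by gcongr; linarith
    _ ≤ 5 * (s + s⁻¹) * (1 + p ^ 2) := by
      nlinarith [mul_nonneg (sq_nonneg p) hs.le, mul_nonneg (sq_nonneg p) hs'.le]

end OrderedField

/-- For `z = (x₁,x₃) ≠ 0`, `w = (x₂,x₄)` with `|x₁x₄ − x₂x₃| ≤ 2`: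
`1 + ‖x‖² ≪ (‖z‖² + ‖z‖⁻²)(1 + |z·w|)²` with an absolute implied constant. -/
theorem norm_bound_from_det_bound :
    ∃ C : ℝ, 0 < C ∧ ∀ x₁ x₂ x₃ x₄ : ℝ, (x₁, x₃) ≠ (0, 0) →
      |x₁ * x₄ - x₂ * x₃| ≤ 2 →
      1 + (x₁^2 + x₂^2 + x₃^2 + x₄^2)
        ≤ C * ((x₁^2 + x₃^2) + (x₁^2 + x₃^2)⁻¹) * (1 + |x₁*x₂ + x₃*x₄|) ^ 2 := by
  refine ⟨5, by norm_num, fun x₁ x₂ x₃ x₄ hz hd => ?_⟩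
  have hs := sq_add_sq_pos_of_ne_zero hz
  have hw : x₂ ^ 2 + x₄ ^ 2 =
      ((x₁ * x₂ + x₃ * x₄) ^ 2 + (x₁ * x₄ - x₂ * x₃) ^ 2) / (x₁ ^ 2 + x₃ ^ 2) := by
    rw [eq_div_iff hs.ne', mul_comm, sq_add_sq_mul_sq_add_sq_eq_inner_sq_add_det_sq]
  calc 1 + (x₁^2 + x₂^2 + x₃^2 + x₄^2)
      = 1 + (x₁ ^ 2 + x₃ ^ 2) + (x₂ ^ 2 + x₄ ^ 2) := by ring
    _ ≤ 5 * ((x₁^2 + x₃^2) + (x₁^2 + x₃^2)⁻¹) * (1 + (x₁*x₂ + x₃*x₄) ^ 2) := by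
      rw [hw]; exact one_add_add_sq_add_sq_div_le hs hd
    _ ≤ 5 * ((x₁^2 + x₃^2) + (x₁^2 + x₃^2)⁻¹) * (1 + |x₁*x₂ + x₃*x₄|) ^ 2 := by
      gcongr; exact one_add_sq_le_one_add_abs_sq _
end
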